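/- Let Z ⊆ {0,1}^n be a code of size N with dual distance distribution (A_k^⊥)_{k=0}^n. Then the quadratic discrepancy of Z satisfies D^{L2}(Z) = 2^{−n}·Σ_{k=1}^n A_k^⊥·Σ_{t=0}^{n−1} (K_t^{(n−1)}(k−1))². -/

import Mathlib

/-- The quadratic discrepancy of a code `Z ⊆ {0,1}^n`. -/
noncomputable def disc (n : ℕ) (Z : Finset (Fin n → Bool)) : ℝ :=
  ∑ t ∈ Finset.range (n + 1), ∑ x : Fin n → Bool,
    ((Z.card : ℝ)⁻¹ * ((Z.filter (fun z => hammingDist x z ≤ t)).card : ℝ)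
      - ((2 : ℝ) ^ n)⁻¹ *
          ((Finset.univ.filter (fun z : Fin n → Bool => hammingDist x z ≤ t)).card : ℝ)) ^ 2

/-- The distance distribution `A_w = (1/N)·|{(z,z') ∈ Z×Z : d(z,z') = w}|` of a code. -/
noncomputable def distDistr (n : ℕ) (Z : Finset (Fin n → Bool)) (w : ℕ) : ℝ :=
  (Z.card : ℝ)⁻¹ * (((Z ×ˢ Z).filter (fun p => hammingDist p.1 p.2 = w)).card : ℝ)

/-- The Krawtchouk polynomial `K_k^{(n)}(x) = Σ_{i=0}^k (−1)^i·C(x,i)·C(n−x,k−i)`. -/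
def kraw (n k x : ℕ) : ℤ :=
  ∑ i ∈ Finset.range (k + 1),
    (-1 : ℤ) ^ i * (Nat.choose x i : ℤ) * (Nat.choose (n - x) (k - i) : ℤ)

/-- The dual distance distribution `A_w^⊥ = (1/N)·Σ_{i=0}^n K_w^{(n)}(i)·A_i` of a code. -/
noncomputable def dualDistDistr (n : ℕ) (Z : Finset (Fin n → Bool)) (w : ℕ) : ℝ :=
  (Z.card : ℝ)⁻¹ * ∑ i ∈ Finset.range (n + 1), (kraw n w i : ℝ) * distDistr n Z i

/-!
The local discrepancy at radius `t`, `x ↦ N⁻¹ |Z ∩ B(x,t)| - 2⁻ⁿ |B(x,t)|`, is the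
convolution (over `(ℤ/2)ⁿ`) of the signed measure `N⁻¹ 1_Z - 2⁻ⁿ` with the indicator of the
ball `B(0,t)`. Parseval for the Walsh characters `χ_s(x) = (-1)^|s ∧ x|` turns the sum of its
squares into `2⁻ⁿ Σ_s` of the product of the two squared transforms. The transform of the
measure vanishes at `s = 0` and is `N⁻¹ Σ_{z ∈ Z} χ_s(z)` otherwise; its square summed over
`|s| = k` is `A_k^⊥`, because `Σ_{|s| = k} χ_s(y) = K_k(|y|)`. The transform of the ball is
`Σ_{w ≤ t} K_w^{(n)}(|s|)`, which the Pascal recurrence for Krawtchouk polynomials telescopes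
to `K_t^{(n-1)}(|s| - 1)`; it vanishes at `t = n`.
-/

open Finset

lemma kraw_succ_succ_succ (m t k : ℕ) :
    kraw (m + 1) (t + 1) (k + 1) = kraw m (t + 1) k - kraw m t k := by
  simp only [kraw, sum_range_succ' _ (t + 1), Nat.choose_succ_succ', Nat.add_sub_add_right,
    Nat.choose_zero_right]
  push_cast
  simp only [mul_add, add_mul, sum_add_distrib, pow_succ, mul_neg_one, neg_mul, sum_neg_distrib]
  ring

lemma sum_range_kraw_succ_succ (m t k : ℕ) :
    ∑ w ∈ range (t + 1), kraw (m + 1) w (k + 1) = kraw m t k := by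
  induction t with
  | zero => simp [kraw]
  | succ t ih => rw [sum_range_succ, ih, kraw_succ_succ_succ]; ring

lemma kraw_eq_zero_of_lt {m t x : ℕ} (hx : x ≤ m) (ht : m < t) : kraw m t x = 0 := by
  refine sum_eq_zero fun i _ => ?_
  rcases le_or_gt i x with hi | hi
  · rw [Nat.choose_eq_zero_of_lt (by omega : m - x < t - i)]; simp
  · rw [Nat.choose_eq_zero_of_lt hi]; simp

namespace BooleanCube

variable {ι : Type*} [Fintype ι]

lemma hammingNorm_eq_card (x : ι → Bool) : hammingNorm x = #{i | x i = true} := by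
  simp [hammingNorm, Bool.zero_eq_false]

def walsh (s : ι → Bool) : AddChar (ι → Bool) ℝ where
  toFun x := ∏ i, if s i && x i then -1 else 1
  map_zero_eq_one' := by simp [Bool.zero_eq_false]
  map_add_eq_mul' x y := by
    rw [← prod_mul_distrib]
    refine prod_congr rfl fun i _ => ?_
    rcases Bool.eq_false_or_eq_true (s i) with hs | hs <;>
    rcases Bool.eq_false_or_eq_true (x i) with hx | hx <;>
    rcases Bool.eq_false_or_eq_true (y i) with hy | hy <;>
    simp [hs, hx, hy, Bool.add_eq_xor]

lemma walsh_apply (s x : ι → Bool) : walsh s x = ∏ i, if s i && x i then -1 else 1 := rfl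

lemma walsh_comm (s x : ι → Bool) : walsh s x = walsh x s := by
  simp only [walsh_apply, Bool.and_comm]

lemma walsh_zero_left (x : ι → Bool) : walsh 0 x = 1 := by
  simp [walsh_apply, Bool.zero_eq_false]

lemma walsh_eq_neg_one_pow (s x : ι → Bool) : walsh s x = (-1) ^ hammingNorm (s * x) := by
  rw [walsh_apply, ← prod_filter, prod_const, hammingNorm]
  simp [Bool.mul_eq_and, Bool.zero_eq_false]

-- On the cube `x - y = x + y` holds definitionally (coordinatewise `xor`).
lemma walsh_sub (s x y : ι → Bool) : walsh s (x - y) = walsh s x * walsh s y :=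
  (walsh s).map_add_eq_mul x y

lemma hammingDist_eq_hammingNorm_sub (x y : ι → Bool) : hammingDist x y = hammingNorm (x - y) :=
  hammingDist_eq_hammingNorm x y

variable [DecidableEq ι]

lemma sum_walsh (s : ι → Bool) :
    ∑ x, walsh s x = if s = 0 then 2 ^ Fintype.card ι else 0 := by
  have hprod : ∑ x, walsh s x = ∏ i, ∑ b : Bool, if s i && b then -1 else 1 := by
    rw [Fintype.prod_sum]; rfl
  rw [hprod]
  split_ifs with hs
  · simp [hs, Bool.zero_eq_false]
  · obtain ⟨i, hi⟩ : ∃ i, s i = true := by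
      by_contra! h
      exact hs (funext fun i => by simpa [Bool.zero_eq_false] using h i)
    exact prod_eq_zero (mem_univ i) (by simp [hi])

lemma sum_walsh_left (x : ι → Bool) :
    ∑ s, walsh s x = if x = 0 then 2 ^ Fintype.card ι else 0 := by
  simp only [walsh_comm _ x, sum_walsh]

def walshTransform (f : (ι → Bool) → ℝ) (s : ι → Bool) : ℝ :=
  ∑ x, f x * walsh s x

theorem sum_sq_walshTransform (f : (ι → Bool) → ℝ) :
    ∑ s, walshTransform f s ^ 2 = 2 ^ Fintype.card ι * ∑ x, f x ^ 2 := by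
  have hsq : ∀ s, walshTransform f s ^ 2 = ∑ x, ∑ y, f x * f y * walsh s (x - y) := by
    intro s
    simp only [walshTransform, sq, sum_mul_sum, walsh_sub]
    exact sum_congr rfl fun x _ => sum_congr rfl fun y _ => by ring
  calc ∑ s, walshTransform f s ^ 2
      = ∑ x, ∑ y, f x * f y * ∑ s, walsh s (x - y) := by
        simp only [hsq, mul_sum]
        rw [sum_comm]
        exact sum_congr rfl fun x _ => sum_comm
    _ = 2 ^ Fintype.card ι * ∑ x, f x ^ 2 := by
        simp only [sum_walsh_left, sub_eq_zero, mul_ite, mul_zero, sum_ite_eq, mem_univ,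
          if_true, mul_sum]
        exact sum_congr rfl fun x _ => by ring

def conv (c h : (ι → Bool) → ℝ) (x : ι → Bool) : ℝ :=
  ∑ z, c z * h (x - z)

theorem walshTransform_conv (c h : (ι → Bool) → ℝ) (s : ι → Bool) :
    walshTransform (conv c h) s = walshTransform c s * walshTransform h s := by
  have hshift : ∀ z, ∑ x, h (x - z) * walsh s x = walsh s z * walshTransform h s := by
    intro z
    rw [walshTransform, mul_sum]
    refine Fintype.sum_equiv (Equiv.subRight z) _ _ fun x => ?_
    rw [Equiv.subRight_apply, mul_left_comm, ← AddChar.map_add_eq_mul, add_sub_cancel]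
  calc walshTransform (conv c h) s = ∑ z, c z * ∑ x, h (x - z) * walsh s x := by
        simp only [walshTransform, conv, sum_mul, mul_sum, mul_assoc]
        exact sum_comm
    _ = walshTransform c s * walshTransform h s := by
        simp only [hshift, walshTransform, sum_mul, mul_assoc]

-- A word `y` is split along the support `S` of `s` into `(supp y ∩ S, supp y \ S)`.
lemma card_filter_hammingNorm_eq_and_hammingNorm_mul_eq (s : ι → Bool) {i w : ℕ}
    (hi : i ≤ w) :
    #{y : ι → Bool | hammingNorm y = w ∧ hammingNorm (s * y) = i}
      = (hammingNorm s).choose i * (Fintype.card ι - hammingNorm s).choose (w - i) := by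
  set S : Finset ι := {j | s j = true}
  set supp : (ι → Bool) → Finset ι := fun y => {j | y j = true}
  set glue : Finset ι × Finset ι → ι → Bool := fun p j => decide (j ∈ p.1 ∪ p.2)
  have hnorm : ∀ y, hammingNorm y = #(supp y) := hammingNorm_eq_card
  have hmul : ∀ y, hammingNorm (s * y) = #(supp y ∩ S) := by
    intro y; rw [hnorm]; congr 1; ext j; simp [supp, S, Bool.mul_eq_and, and_comm]
  have hglue : ∀ p : Finset ι × Finset ι, p.1 ⊆ S → p.2 ⊆ Sᶜ →
      supp (glue p) ∩ S = p.1 ∧ supp (glue p) \ S = p.2 := by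
    rintro ⟨A, B⟩ hA hB
    constructor <;> ext j <;> have := @hA j <;> have := @hB j <;> simp [supp, glue] at * <;> tauto
  have hSc : Fintype.card ι - hammingNorm s = #Sᶜ := by
    rw [card_compl, hnorm]
  rw [hSc, hnorm, ← card_powersetCard, ← card_powersetCard, ← card_product]
  refine card_bij' (fun y _ => (supp y ∩ S, supp y \ S)) (fun p _ => glue p) ?_ ?_ ?_ ?_
  · intro y hy
    simp only [mem_filter, mem_univ, true_and, hmul, hnorm y] at hy
    have := card_sdiff_add_card_inter (supp y) S
    simp only [mem_product, mem_powersetCard]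
    exact ⟨⟨inter_subset_right, hy.2⟩, ⟨fun j hj => by simp_all, by omega⟩⟩
  · rintro p hp
    simp only [mem_product, mem_powersetCard] at hp
    obtain ⟨hinter, hsdiff⟩ := hglue p hp.1.1 hp.2.1
    have := card_sdiff_add_card_inter (supp (glue p)) S
    rw [hinter, hsdiff, hp.1.2, hp.2.2] at this
    simp only [mem_filter, mem_univ, true_and, hmul, hnorm, hinter, hp.1.2, and_true]
    omega
  · intro y _
    funext j
    by_cases hj : j ∈ S <;> simp [glue, supp, hj]
  · intro p hp
    simp only [mem_product, mem_powersetCard] at hp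
    obtain ⟨hinter, hsdiff⟩ := hglue p hp.1.1 hp.2.1
    exact Prod.ext hinter hsdiff

theorem sum_walsh_of_hammingNorm_eq (s : ι → Bool) (w : ℕ) :
    ∑ y with hammingNorm y = w, walsh s y = kraw (Fintype.card ι) w (hammingNorm s) := by
  have hmaps : ∀ y ∈ ({y | hammingNorm y = w} : Finset (ι → Bool)),
      hammingNorm (s * y) ∈ range (w + 1) := by
    intro y hy
    rw [mem_range_succ_iff, ← (mem_filter.1 hy).2, hammingNorm_eq_card, hammingNorm_eq_card]
    exact card_le_card fun j => by simp [Bool.mul_eq_and]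
  rw [← sum_fiberwise_of_maps_to hmaps, kraw]
  push_cast
  refine sum_congr rfl fun i hi => ?_
  rw [sum_congr rfl fun y hy => by rw [walsh_eq_neg_one_pow, (mem_filter.1 hy).2], sum_const,
    filter_filter, card_filter_hammingNorm_eq_and_hammingNorm_mul_eq s (mem_range_succ_iff.1 hi),
    nsmul_eq_mul]
  push_cast
  ring

def ballIndicator (t : ℕ) (y : ι → Bool) : ℝ :=
  if hammingNorm y ≤ t then 1 else 0

theorem walshTransform_ballIndicator {s : ι → Bool} (hs : s ≠ 0) (t : ℕ) :
    walshTransform (ballIndicator t) s = kraw (Fintype.card ι - 1) t (hammingNorm s - 1) := by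
  obtain ⟨k, hk⟩ : ∃ k, hammingNorm s = k + 1 :=
    Nat.exists_eq_add_one.2 (hammingNorm_pos_iff.2 hs)
  obtain ⟨m, hm⟩ : ∃ m, Fintype.card ι = m + 1 :=
    Nat.exists_eq_add_one.2 (hk ▸ hammingNorm_le_card_fintype (x := s) |>.trans_lt' k.succ_pos)
  calc walshTransform (ballIndicator t) s
      = ∑ y, ∑ w ∈ range (t + 1), if hammingNorm y = w then walsh s y else 0 := by
        simp only [walshTransform, ballIndicator, sum_ite_eq, mem_range_succ_iff, ite_mul,
          one_mul, zero_mul]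
    _ = ∑ w ∈ range (t + 1), ∑ y with hammingNorm y = w, walsh s y := by
        rw [sum_comm]; simp only [sum_filter]
    _ = kraw (Fintype.card ι - 1) t (hammingNorm s - 1) := by
        simp only [sum_walsh_of_hammingNorm_eq, hm, hk, Nat.add_sub_cancel]
        exact_mod_cast sum_range_kraw_succ_succ m t k

theorem sum_range_sq_walshTransform_ballIndicator {s : ι → Bool} (hs : s ≠ 0) :
    ∑ t ∈ range (Fintype.card ι + 1), walshTransform (ballIndicator t) s ^ 2
      = ∑ t ∈ range (Fintype.card ι),
          (kraw (Fintype.card ι - 1) t (hammingNorm s - 1) : ℝ) ^ 2 := by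
  have hpos : 0 < Fintype.card ι := (hammingNorm_pos_iff.2 hs).trans_le hammingNorm_le_card_fintype
  rw [sum_range_succ, walshTransform_ballIndicator hs,
    kraw_eq_zero_of_lt (Nat.sub_le_sub_right hammingNorm_le_card_fintype 1)
      (Nat.sub_one_lt_of_lt hpos)]
  simp [walshTransform_ballIndicator hs]

noncomputable def empiricalDeviation (Z : Finset (ι → Bool)) (z : ι → Bool) : ℝ :=
  (#Z : ℝ)⁻¹ * (if z ∈ Z then 1 else 0) - (2 ^ Fintype.card ι)⁻¹

theorem conv_empiricalDeviation_ballIndicator (Z : Finset (ι → Bool)) (t : ℕ)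
    (x : ι → Bool) :
    conv (empiricalDeviation Z) (ballIndicator t) x
      = (#Z : ℝ)⁻¹ * #{z ∈ Z | hammingDist x z ≤ t}
        - (2 ^ Fintype.card ι)⁻¹ * #{z | hammingDist x z ≤ t} := by
  simp only [conv, empiricalDeviation, ballIndicator, sub_mul, sum_sub_distrib, mul_assoc,
    ← mul_sum, ite_mul, one_mul, zero_mul, sum_ite_mem, univ_inter, natCast_card_filter,
    hammingDist_eq_hammingNorm_sub]

theorem walshTransform_empiricalDeviation {Z : Finset (ι → Bool)} (hZ : Z.Nonempty)
    (s : ι → Bool) :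
    walshTransform (empiricalDeviation Z) s
      = if s = 0 then 0 else (#Z : ℝ)⁻¹ * ∑ z ∈ Z, walsh s z := by
  have hsplit : walshTransform (empiricalDeviation Z) s
      = (#Z : ℝ)⁻¹ * ∑ z ∈ Z, walsh s z
        - (2 ^ Fintype.card ι)⁻¹ * ∑ z, walsh s z := by
    simp only [walshTransform, empiricalDeviation, sub_mul, sum_sub_distrib, mul_assoc,
      ← mul_sum, ite_mul, one_mul, zero_mul, sum_ite_mem, univ_inter]
  rw [hsplit, sum_walsh]
  split_ifs with hs
  · simp [hs, walsh_zero_left, hZ.card_ne_zero]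
  · simp

theorem sum_sq_sum_walsh_of_hammingNorm_eq (Z : Finset (ι → Bool)) (k : ℕ) :
    ∑ s with hammingNorm s = k, (∑ z ∈ Z, walsh s z) ^ 2
      = ∑ i ∈ range (Fintype.card ι + 1),
          (kraw (Fintype.card ι) k i : ℝ) * #{p ∈ Z ×ˢ Z | hammingDist p.1 p.2 = i} := by
  have hmaps : ∀ p ∈ Z ×ˢ Z, hammingDist p.1 p.2 ∈ range (Fintype.card ι + 1) :=
    fun p _ => mem_range_succ_iff.2 hammingDist_le_card_fintype
  calc ∑ s with hammingNorm s = k, (∑ z ∈ Z, walsh s z) ^ 2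
      = ∑ s with hammingNorm s = k, ∑ p ∈ Z ×ˢ Z, walsh (p.1 - p.2) s := by
        refine sum_congr rfl fun s _ => ?_
        rw [sq, sum_mul_sum, ← sum_product']
        exact sum_congr rfl fun p _ => by rw [walsh_comm _ s, walsh_sub]
    _ = ∑ p ∈ Z ×ˢ Z, ∑ s with hammingNorm s = k, walsh (p.1 - p.2) s := sum_comm
    _ = ∑ p ∈ Z ×ˢ Z, (kraw (Fintype.card ι) k (hammingDist p.1 p.2) : ℝ) := by
        simp only [sum_walsh_of_hammingNorm_eq, hammingDist_eq_hammingNorm_sub]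
    _ = _ := by
        rw [← sum_fiberwise_of_maps_to hmaps]
        refine sum_congr rfl fun i _ => ?_
        rw [sum_congr rfl fun p hp => by rw [(mem_filter.1 hp).2], sum_const, nsmul_eq_mul,
          mul_comm]

end BooleanCube

open BooleanCube

theorem disc_eq_sum_walshTransform (n : ℕ) (Z : Finset (Fin n → Bool)) :
    disc n Z = ((2 : ℝ) ^ n)⁻¹ * ∑ s, walshTransform (empiricalDeviation Z) s ^ 2 *
      ∑ t ∈ range (n + 1), walshTransform (ballIndicator t) s ^ 2 := by
  have hparseval : ∀ f : (Fin n → Bool) → ℝ,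
      ∑ x, f x ^ 2 = ((2 : ℝ) ^ n)⁻¹ * ∑ s, walshTransform f s ^ 2 := by
    intro f
    rw [sum_sq_walshTransform, Fintype.card_fin, inv_mul_cancel_left₀ (by positivity)]
  calc disc n Z
      = ∑ t ∈ range (n + 1), ∑ x, conv (empiricalDeviation Z) (ballIndicator t) x ^ 2 := by
        simp only [disc, conv_empiricalDeviation_ballIndicator, Fintype.card_fin]
    _ = _ := by
        simp only [hparseval, walshTransform_conv, ← mul_sum, mul_pow]
        rw [sum_comm]
        simp only [mul_sum]

theorem dualDistDistr_eq_sum_sq (n : ℕ) (Z : Finset (Fin n → Bool)) (k : ℕ) :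
    dualDistDistr n Z k
      = ∑ s with hammingNorm s = k, ((#Z : ℝ)⁻¹ * ∑ z ∈ Z, walsh s z) ^ 2 := by
  simp only [mul_pow, ← mul_sum]
  rw [sum_sq_sum_walsh_of_hammingNorm_eq, Fintype.card_fin, dualDistDistr, mul_sum, mul_sum]
  exact sum_congr rfl fun i _ => by rw [distDistr]; ring

/-- Transform-domain expression of the discrepancy:
`D^{L2}(Z) = 2^{−n}·Σ_{k=1}^n A_k^⊥·Σ_{t=0}^{n−1} (K_t^{(n−1)}(k−1))²`. -/
theorem discrepancy_dual_expansion (n : ℕ) (Z : Finset (Fin n → Bool)) (hZ : Z.Nonempty) :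
    disc n Z
      = ((2 : ℝ) ^ n)⁻¹ * ∑ k ∈ Finset.Icc 1 n, dualDistDistr n Z k *
          ∑ t ∈ Finset.range n, ((kraw (n - 1) t (k - 1) : ℝ)) ^ 2 := by
  have hweight : ∀ s ∈ (univ : Finset (Fin n → Bool)), hammingNorm s ∈ Icc 0 n :=
    fun _ _ => mem_Icc.2 ⟨Nat.zero_le _, hammingNorm_le_card_fintype.trans_eq (Fintype.card_fin n)⟩
  rw [disc_eq_sum_walshTransform, ← sum_fiberwise_of_maps_to hweight,
    ← add_sum_Ioc_eq_sum_Icc n.zero_le, ← Icc_add_one_left_eq_Ioc, zero_add]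
  congr 1
  rw [sum_eq_zero fun s hs => ?_, zero_add]
  · refine sum_congr rfl fun k hk => ?_
    rw [dualDistDistr_eq_sum_sq, sum_mul]
    refine sum_congr rfl fun s hs => ?_
    have hsk : hammingNorm s = k := (mem_filter.1 hs).2
    have hs0 : s ≠ 0 := hammingNorm_ne_zero_iff.1 (by have := (mem_Icc.1 hk).1; omega)
    rw [walshTransform_empiricalDeviation hZ, if_neg hs0]
    congr 1
    simpa only [Fintype.card_fin, hsk] using sum_range_sq_walshTransform_ballIndicator hs0
  · rw [hammingNorm_eq_zero.1 (mem_filter.1 hs).2, walshTransform_empiricalDeviation hZ,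
      if_pos rfl]
    simp
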